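/- Let (p_n) and (q_n) be sequences of odd prime numbers with p_n ≠ q_n for all n and p_n/q_n → 1 as n → ∞, and set c_n = −(p_n⁴ − 2p_n³q_n + 2p_n²q_n² − 2p_nq_n³ + q_n⁴)/(2 p_n q_n)². Then for all sufficiently large n, the map f_{c_n}(z) = z² + c_n has exactly 6 rational preperiodic points (namely ±1/2 ± (p_n² − p_nq_n + q_n²)/(2p_nq_n) and ±(p_n² − q_n²)/(2p_nq_n)), of which exactly 2 are periodic and both are fixed points of f_{c_n}. -/

import Mathlib

open Filter

/-- The quadratic map `f_c(z) = z² + c`. -/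
def fc (c : ℚ) : ℚ → ℚ := fun z => z ^ 2 + c

/-- `x` is preperiodic for `f_c`: its forward orbit is eventually periodic. -/
def IsPreper (c x : ℚ) : Prop := ∃ m n : ℕ, m < n ∧ (fc c)^[m] x = (fc c)^[n] x

/-- `x` is periodic for `f_c`. -/
def IsPer (c x : ℚ) : Prop := ∃ n : ℕ, 1 ≤ n ∧ (fc c)^[n] x = x

/-!
With `r = (p² - pq + q²)/(2pq)` and `a = (p² - q²)/(2pq)` one has `c = 1/4 - r²` and
`a² = r² + r - 3/4`, so `f_c` fixes `1/2 ± r`, sends `-(1/2 ± r)` to these fixed points and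
`±a` to `r - 1/2`. A periodic orbit cannot leave `[-(1/2 + r), 1/2 + r]`, since outside it `|z|`
grows strictly, and inside it, where moreover `z ≥ c`, the distance to the fixed point `1/2 - r`
shrinks strictly unless it is zero; so the only periodic points are the two fixed points. It
remains to see that the six points are closed under taking rational preimages: `-(1/2 + r)` has
no real preimage, and `±a` has none because `(p² + q²)² - 4pq³` is not a square. For
`p < q < 2p` it is negative; for `q < p < 2q` a square root `2t` would split
`pq³ = (m - t)(m + t)` with `2m = p² + q²`, and no factorisation of `pq³` has this sum.
Only `1/2 < p/q < 2` is needed, which holds eventually.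
-/

open Function

theorem add_ne_sq_add_sq_of_mul_eq {p q d e : ℕ} (hp : p.Prime) (hq : q.Prime) (hqp : q < p)
    (hp2q : p < 2 * q) (hde : d * e = p * q ^ 3) (hqd : ¬q ∣ d) : d + e ≠ p ^ 2 + q ^ 2 := by
  have hdp : d ∣ p :=
    (Nat.Coprime.pow_left 3 ((hq.coprime_iff_not_dvd).mpr hqd)).symm.dvd_of_dvd_mul_right
      ⟨e, hde.symm⟩
  rcases hp.eq_one_or_self_of_dvd d hdp with rfl | hd
  · rw [one_mul] at hde
    subst hde
    have : p * q * 4 ≤ p * q * q ^ 2 := Nat.mul_le_mul_left _ (by nlinarith [hq.two_le])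
    nlinarith
  · rw [hd] at hde ⊢
    obtain rfl : e = q ^ 3 := Nat.eq_of_mul_eq_mul_left hp.pos hde
    intro h
    have hpq : p * (p - 1) = q ^ 2 * (q - 1) := by
      zify [hp.one_le, hq.one_le] at h ⊢
      linear_combination -h
    rcases (Nat.Prime.dvd_mul hp).mp (Dvd.intro _ hpq) with h | h
    · exact hqp.ne' ((Nat.prime_dvd_prime_iff_eq hp hq).mp (hp.dvd_of_dvd_pow h))
    · have := Nat.le_of_dvd (Nat.sub_pos_of_lt hq.one_lt) h
      omega

theorem not_isSquare_sq_add_sq_sq_sub_of_lt {p q : ℕ} (hp : p.Prime) (hq : q.Prime)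
    (hpo : Odd p) (hqo : Odd q) (hqp : q < p) (hp2q : p < 2 * q) :
    ¬IsSquare (((p : ℤ) ^ 2 + q ^ 2) ^ 2 - 4 * p * q ^ 3) := by
  rintro ⟨s, hs⟩
  obtain ⟨m, hm⟩ : Even ((p : ℤ) ^ 2 + q ^ 2) := (hpo.pow.add_odd hqo.pow).natCast
  obtain ⟨t, rfl⟩ : Even s := by
    have : Even (s * s) := ⟨2 * m ^ 2 - 2 * p * q ^ 3, by rw [← hs, hm]; ring⟩
    simpa [Int.even_mul] using this
  have hprod : (m - t) * (m + t) = p * q ^ 3 := by rw [hm] at hs; linarith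
  have hsum : (m - t) + (m + t) = p ^ 2 + q ^ 2 := by linear_combination -hm
  have hpos : 0 < (p : ℤ) * q ^ 3 := by have := hp.pos; have := hq.pos; positivity
  obtain ⟨d, hd⟩ : ∃ d : ℕ, (d : ℤ) = m - t :=
    ⟨(m - t).toNat, Int.toNat_of_nonneg (by nlinarith)⟩
  obtain ⟨e, he⟩ : ∃ e : ℕ, (e : ℤ) = m + t :=
    ⟨(m + t).toNat, Int.toNat_of_nonneg (by nlinarith)⟩
  rw [← hd, ← he] at hprod hsum
  have hde : d * e = p * q ^ 3 := by exact_mod_cast hprod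
  have hsum' : d + e = p ^ 2 + q ^ 2 := by exact_mod_cast hsum
  by_cases hqd : q ∣ d
  · refine add_ne_sq_add_sq_of_mul_eq (d := e) (e := d) hp hq hqp hp2q (by rw [mul_comm, hde])
      (fun hqe => ?_) (by rw [add_comm, hsum'])
    have : q ∣ p ^ 2 + q ^ 2 := hsum' ▸ dvd_add hqd hqe
    have hqp' : q ∣ p :=
      hq.dvd_of_dvd_pow ((Nat.dvd_add_left (dvd_pow_self q two_ne_zero)).mp this)
    exact hqp.ne ((Nat.prime_dvd_prime_iff_eq hq hp).mp hqp')
  · exact add_ne_sq_add_sq_of_mul_eq hp hq hqp hp2q hde hqd hsum'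

theorem sq_add_sq_sq_lt {p q : ℤ} (hp : 0 < p) (hpq : p < q) (hq : q < 2 * p) :
    (p ^ 2 + q ^ 2) ^ 2 < 4 * p * q ^ 3 := by
  nlinarith [mul_pos hp (sub_pos.mpr hpq), mul_pos (sub_pos.mpr hpq) (sub_pos.mpr hq)]

theorem not_isSquare_sq_add_sq_sq_sub {p q : ℕ} (hp : p.Prime) (hq : q.Prime) (hpo : Odd p)
    (hqo : Odd q) (hne : p ≠ q) (hp2q : p < 2 * q) (hq2p : q < 2 * p) :
    ¬IsSquare (((p : ℤ) ^ 2 + q ^ 2) ^ 2 - 4 * p * q ^ 3) := by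
  rcases hne.lt_or_gt with hpq | hqp
  · intro h
    have := sq_add_sq_sq_lt (p := p) (q := q) (by exact_mod_cast hp.pos) (by exact_mod_cast hpq)
      (by exact_mod_cast hq2p)
    linarith [h.nonneg]
  · exact not_isSquare_sq_add_sq_sq_sub_of_lt hp hq hpo hqo hqp hp2q

theorem IsSquare.of_div_sq {x d : ℚ} (hd : d ≠ 0) (h : IsSquare (x / d ^ 2)) : IsSquare x := by
  obtain ⟨y, hy⟩ := h
  exact ⟨y * d, by rw [← div_mul_cancel₀ x (pow_ne_zero 2 hd), hy]; ring⟩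

section PeriodicPoints

variable {X : Type*} {f : X → X}

theorem Function.IsFixedPt.eq_of_iterate_eq {y z : X} {k : ℕ} (hz : IsFixedPt f z)
    (hy : y ∈ periodicPts f) (hk : f^[k] y = z) : y = z := by
  obtain ⟨N, hN, hper⟩ := hy
  exact (hper.iterate k).eq_of_apply_eq_same ((hz.isPeriodicPt N).iterate k) hN
    (by rw [hk, (hz.iterate k).eq])

theorem Function.notMem_periodicPts_of_lt {γ : Type*} [Preorder γ] {V : X → γ} {y : X}
    (h : ∀ k, V (f^[k + 1] y) < V (f^[k] y)) : y ∉ periodicPts f := by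
  rintro ⟨N, hN, hper⟩
  have := strictAnti_nat_of_succ_lt (f := fun k => V (f^[k] y)) h hN
  simp only [iterate_zero_apply, hper.eq, lt_self_iff_false] at this

theorem Set.mem_of_iterate_mem {S : Set X} (hS : f ⁻¹' S ⊆ S) {m : ℕ} {x : X}
    (hx : f^[m] x ∈ S) : x ∈ S := by
  by_contra h
  exact (Set.MapsTo.iterate (f := f) (s := Sᶜ) (fun _ hy hfy => hy (hS hfy)) m) h hx

end PeriodicPoints

section QuadraticMap

theorem setOf_isPer_eq_periodicPts (c : ℚ) : {x | IsPer c x} = periodicPts (fc c) := by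
  ext x
  simp [IsPer, periodicPts, IsPeriodicPt, IsFixedPt, Nat.one_le_iff_ne_zero, Nat.pos_iff_ne_zero]

theorem isPreper_iff_exists_iterate_mem_periodicPts {c x : ℚ} :
    IsPreper c x ↔ ∃ m, (fc c)^[m] x ∈ periodicPts (fc c) := by
  constructor
  · rintro ⟨m, n, hmn, h⟩
    refine ⟨m, mk_mem_periodicPts (n := n - m) (by omega) ?_⟩
    rw [IsPeriodicPt, IsFixedPt, ← iterate_add_apply, Nat.sub_add_cancel hmn.le, h]
  · rintro ⟨m, N, hN, hper⟩
    exact ⟨m, N + m, by omega, by rw [iterate_add_apply, hper.eq]⟩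

theorem fc_neg (c z : ℚ) : fc c (-z) = fc c z := by simp [fc]

theorem fc_abs (c z : ℚ) : fc c |z| = fc c z := by simp [fc]

theorem fc_eq_fc_iff {c y z : ℚ} : fc c y = fc c z ↔ y = z ∨ y = -z := by
  simp [fc, sq_eq_sq_iff_eq_or_eq_neg]

theorem le_of_mem_periodicPts_fc {c y : ℚ} (hy : y ∈ periodicPts (fc c)) : c ≤ y := by
  obtain ⟨z, rfl⟩ := periodicPts_subset_range hy
  simp only [fc]
  nlinarith [sq_nonneg z]

variable {c r a : ℚ}

theorem isFixedPt_fc_half_add (hc : c = 1 / 4 - r ^ 2) : IsFixedPt (fc c) (1 / 2 + r) := by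
  simp only [IsFixedPt, fc, hc]; ring

theorem isFixedPt_fc_half_sub (hc : c = 1 / 4 - r ^ 2) : IsFixedPt (fc c) (1 / 2 - r) := by
  simp only [IsFixedPt, fc, hc]; ring

theorem fc_neg_half_sub (hc : c = 1 / 4 - r ^ 2) : fc c (-(1 / 2) - r) = 1 / 2 + r := by
  rw [← neg_add', fc_neg, isFixedPt_fc_half_add hc]

theorem fc_neg_half_add (hc : c = 1 / 4 - r ^ 2) : fc c (-(1 / 2) + r) = 1 / 2 - r := by
  simp only [fc, hc]; ring

theorem fc_of_sq_eq (hc : c = 1 / 4 - r ^ 2) (ha : a ^ 2 = r ^ 2 + r - 3 / 4) :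
    fc c a = -(1 / 2) + r := by
  simp only [fc, hc]; linear_combination ha

theorem abs_lt_fc (hc : c = 1 / 4 - r ^ 2) (hr : 0 ≤ r) {z : ℚ} (hz : 1 / 2 + r < |z|) :
    |z| < fc c z := by
  have : 0 < (|z| - 1 / 2 - r) * (|z| - 1 / 2 + r) := mul_pos (by linarith) (by linarith)
  simp only [fc, hc]
  nlinarith [sq_abs z]

theorem abs_le_of_mem_periodicPts_fc (hc : c = 1 / 4 - r ^ 2) (hr : 0 ≤ r) {y : ℚ}
    (hy : y ∈ periodicPts (fc c)) : |y| ≤ 1 / 2 + r := by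
  by_contra! h
  have hesc : ∀ k, 1 / 2 + r < |(fc c)^[k] y| := by
    intro k
    induction k with
    | zero => exact h
    | succ k ih =>
      rw [iterate_succ_apply']
      exact ih.trans ((abs_lt_fc hc hr ih).trans_le (le_abs_self _))
  refine notMem_periodicPts_of_lt (V := fun z => -|z|) (fun k => ?_) hy
  rw [iterate_succ_apply']
  exact neg_lt_neg ((abs_lt_fc hc hr (hesc k)).trans_le (le_abs_self _))

theorem abs_fc_sub_lt (hc : c = 1 / 4 - r ^ 2) {z : ℚ} (hz : z ≠ 1 / 2 - r)
    (hlo : -1 < z + (1 / 2 - r)) (hhi : z + (1 / 2 - r) < 1) :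
    |fc c z - (1 / 2 - r)| < |z - (1 / 2 - r)| := by
  have : fc c z - (1 / 2 - r) = (z - (1 / 2 - r)) * (z + (1 / 2 - r)) := by
    simp only [fc, hc]; ring
  rw [this, abs_mul]
  exact mul_lt_of_lt_one_right (abs_pos.mpr (sub_ne_zero.mpr hz)) (abs_lt.mpr ⟨hlo, hhi⟩)

/-- The bound `r ^ 2 + r < 7 / 4` says `c + (1/2 - r) > -1`, which makes `f_c` a strict
contraction towards `1/2 - r` on `[c, 1/2 + r)`. -/
theorem periodicPts_fc (hc : c = 1 / 4 - r ^ 2) (hr : 0 ≤ r) (hr' : r ^ 2 + r < 7 / 4) :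
    periodicPts (fc c) = {1 / 2 - r, 1 / 2 + r} := by
  ext y
  refine ⟨fun hy => ?_, ?_⟩
  · have horbit : ∀ k, (fc c)^[k] y ∈ periodicPts (fc c) := fun k => by
      obtain ⟨N, hN, hper⟩ := hy
      exact ⟨N, hN, hper.apply_iterate k⟩
    by_cases hβ : ∃ k, |(fc c)^[k] y| = 1 / 2 + r
    · obtain ⟨k, hk⟩ := hβ
      refine Or.inr ((isFixedPt_fc_half_add hc).eq_of_iterate_eq hy (k := k + 1) ?_)
      rw [iterate_succ_apply', ← fc_abs, hk]
      exact isFixedPt_fc_half_add hc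
    by_cases hα : ∃ k, (fc c)^[k] y = 1 / 2 - r
    · obtain ⟨k, hk⟩ := hα
      exact Or.inl ((isFixedPt_fc_half_sub hc).eq_of_iterate_eq hy hk)
    push Not at hβ hα
    refine absurd hy (notMem_periodicPts_of_lt (V := fun z => |z - (1 / 2 - r)|) fun k => ?_)
    have hhi := (abs_le_of_mem_periodicPts_fc hc hr (horbit k)).lt_of_ne (hβ k)
    have hlo := le_of_mem_periodicPts_fc (horbit k)
    rw [iterate_succ_apply']
    exact abs_fc_sub_lt hc (hα k) (by linarith) (by linarith [le_abs_self ((fc c)^[k] y)])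
  · rintro (rfl | rfl)
    exacts [mk_mem_periodicPts one_pos ((isFixedPt_fc_half_sub hc).isPeriodicPt 1),
      mk_mem_periodicPts one_pos ((isFixedPt_fc_half_add hc).isPeriodicPt 1)]

theorem fc_preimage_subset (hc : c = 1 / 4 - r ^ 2) (hr : 0 ≤ r) (hr' : r ^ 2 + r < 7 / 4)
    (ha : a ^ 2 = r ^ 2 + r - 3 / 4) (hsa : ¬IsSquare (a - c)) (hsna : ¬IsSquare (-a - c)) :
    fc c ⁻¹' {1 / 2 + r, 1 / 2 - r, -(1 / 2) + r, -(1 / 2) - r, a, -a} ⊆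
      {1 / 2 + r, 1 / 2 - r, -(1 / 2) + r, -(1 / 2) - r, a, -a} := by
  intro y hy
  simp only [Set.mem_preimage, Set.mem_insert_iff, Set.mem_singleton_iff] at hy ⊢
  rcases hy with h | h | h | h | h | h
  · rw [← isFixedPt_fc_half_add hc, fc_eq_fc_iff, neg_add'] at h
    tauto
  · rw [← isFixedPt_fc_half_sub hc, fc_eq_fc_iff] at h
    rcases h with h | h
    · tauto
    · exact .inr (.inr (.inl (by rw [h]; ring)))
  · rw [← fc_of_sq_eq hc ha, fc_eq_fc_iff] at h
    tauto
  · simp only [fc, hc] at h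
    nlinarith [sq_nonneg y]
  · exact absurd ⟨y, by simp only [fc] at h; linear_combination -h⟩ hsa
  · exact absurd ⟨y, by simp only [fc] at h; linear_combination -h⟩ hsna

theorem setOf_isPreper_fc (hc : c = 1 / 4 - r ^ 2) (hr : 0 ≤ r) (hr' : r ^ 2 + r < 7 / 4)
    (ha : a ^ 2 = r ^ 2 + r - 3 / 4) (hsa : ¬IsSquare (a - c)) (hsna : ¬IsSquare (-a - c)) :
    {x | IsPreper c x} = {1 / 2 + r, 1 / 2 - r, -(1 / 2) + r, -(1 / 2) - r, a, -a} := by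
  ext x
  rw [Set.mem_ofPred_eq, isPreper_iff_exists_iterate_mem_periodicPts, periodicPts_fc hc hr hr']
  constructor
  · rintro ⟨m, hm⟩
    refine Set.mem_of_iterate_mem (fc_preimage_subset hc hr hr' ha hsa hsna) (m := m) ?_
    simp only [Set.mem_insert_iff, Set.mem_singleton_iff] at hm ⊢
    tauto
  · intro hx
    refine ⟨2, ?_⟩
    simp only [Set.mem_insert_iff, Set.mem_singleton_iff] at hx
    rcases hx with rfl | rfl | rfl | rfl | rfl | rfl <;>
      simp only [iterate_succ_apply', iterate_zero_apply, fc_neg, (isFixedPt_fc_half_add hc).eq,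
        (isFixedPt_fc_half_sub hc).eq, fc_neg_half_add hc, fc_neg_half_sub hc, fc_of_sq_eq hc ha,
        Set.mem_insert_iff, Set.mem_singleton_iff, true_or, or_true]

theorem ncard_preperiodic_points (hr : 1 / 2 < r) (ha : a ^ 2 = r ^ 2 + r - 3 / 4)
    (ha1 : a ^ 2 < 1) :
    ({1 / 2 + r, 1 / 2 - r, -(1 / 2) + r, -(1 / 2) - r, a, -a} : Set ℚ).ncard = 6 := by
  obtain ⟨ha₁, ha₂⟩ : -1 < a ∧ a < 1 := abs_lt.mp ((sq_lt_one_iff_abs_lt_one a).mp ha1)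
  rw [Set.ncard_insert_of_notMem, Set.ncard_insert_of_notMem, Set.ncard_insert_of_notMem,
    Set.ncard_insert_of_notMem, Set.ncard_pair]
  all_goals simp only [Set.mem_insert_iff, Set.mem_singleton_iff, not_or, ne_eq]
  all_goals repeat' constructor
  all_goals intro h; nlinarith

theorem preperiodic_structure_fc (hc : c = 1 / 4 - r ^ 2) (hr : 1 / 2 < r)
    (ha : a ^ 2 = r ^ 2 + r - 3 / 4) (ha1 : a ^ 2 < 1) (hsa : ¬IsSquare (a - c))
    (hsna : ¬IsSquare (-a - c)) :
    {x | IsPreper c x} = {1 / 2 + r, 1 / 2 - r, -(1 / 2) + r, -(1 / 2) - r, a, -a} ∧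
      {x | IsPreper c x}.ncard = 6 ∧ {x | IsPer c x}.ncard = 2 ∧
      ∀ x, IsPer c x → fc c x = x := by
  have hr₀ : 0 ≤ r := by linarith
  have hr' : r ^ 2 + r < 7 / 4 := by linarith
  have hpre := setOf_isPreper_fc hc hr₀ hr' ha hsa hsna
  have hper : {x | IsPer c x} = {1 / 2 - r, 1 / 2 + r} := by
    rw [setOf_isPer_eq_periodicPts, periodicPts_fc hc hr₀ hr']
  refine ⟨hpre, hpre ▸ ncard_preperiodic_points hr ha ha1,
    hper ▸ Set.ncard_pair (by linarith), fun x hx => ?_⟩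
  rcases (hper ▸ hx : x ∈ ({1 / 2 - r, 1 / 2 + r} : Set ℚ)) with rfl | rfl
  exacts [isFixedPt_fc_half_sub hc, isFixedPt_fc_half_add hc]

end QuadraticMap

section Family

variable {P Q : ℚ}

theorem family_c_eq (hP : P ≠ 0) (hQ : Q ≠ 0) :
    -((P ^ 4 - 2 * P ^ 3 * Q + 2 * P ^ 2 * Q ^ 2 - 2 * P * Q ^ 3 + Q ^ 4) / (2 * P * Q) ^ 2) =
      1 / 4 - ((P ^ 2 - P * Q + Q ^ 2) / (2 * P * Q)) ^ 2 := by
  field_simp; ring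

theorem family_a_sq (hP : P ≠ 0) (hQ : Q ≠ 0) :
    ((P ^ 2 - Q ^ 2) / (2 * P * Q)) ^ 2 =
      ((P ^ 2 - P * Q + Q ^ 2) / (2 * P * Q)) ^ 2 + (P ^ 2 - P * Q + Q ^ 2) / (2 * P * Q) -
        3 / 4 := by
  field_simp; ring

theorem one_half_lt_family_r (hP : 0 < P) (hQ : 0 < Q) (hPQ : P ≠ Q) :
    1 / 2 < (P ^ 2 - P * Q + Q ^ 2) / (2 * P * Q) := by
  rw [lt_div_iff₀ (by positivity)]
  nlinarith [sq_pos_of_ne_zero (sub_ne_zero.mpr hPQ)]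

theorem family_a_sq_lt_one (hP : 0 < P) (hQ : 0 < Q) (hPQ : P < 2 * Q) (hQP : Q < 2 * P) :
    ((P ^ 2 - Q ^ 2) / (2 * P * Q)) ^ 2 < 1 := by
  rw [div_pow, div_lt_one (by positivity)]
  nlinarith [mul_pos (sub_pos.mpr hPQ) (sub_pos.mpr hQP), mul_pos hP hQ]

end Family

theorem not_isSquare_family_a_sub_c {p q : ℕ} (hp : p.Prime) (hq : q.Prime) (hpo : Odd p)
    (hqo : Odd q) (hne : p ≠ q) (hpq : p < 2 * q) (hqp : q < 2 * p) :
    ¬IsSquare (((p : ℚ) ^ 2 - q ^ 2) / (2 * p * q) -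
      -((p ^ 4 - 2 * p ^ 3 * q + 2 * p ^ 2 * q ^ 2 - 2 * p * q ^ 3 + q ^ 4) /
        (2 * p * q) ^ 2)) := by
  have hP : (p : ℚ) ≠ 0 := by exact_mod_cast hp.ne_zero
  have hQ : (q : ℚ) ≠ 0 := by exact_mod_cast hq.ne_zero
  have : ((p : ℚ) ^ 2 - q ^ 2) / (2 * p * q) -
      -((p ^ 4 - 2 * p ^ 3 * q + 2 * p ^ 2 * q ^ 2 - 2 * p * q ^ 3 + q ^ 4) / (2 * p * q) ^ 2) =
      ((((p : ℤ) ^ 2 + q ^ 2) ^ 2 - 4 * p * q ^ 3 : ℤ) : ℚ) / (2 * p * q) ^ 2 := by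
    push_cast; field_simp; ring
  rw [this]
  intro h
  exact not_isSquare_sq_add_sq_sq_sub hp hq hpo hqo hne hpq hqp
    (Rat.isSquare_intCast_iff.mp (h.of_div_sq (by positivity)))

theorem eventually_lt_two_mul {p q : ℕ → ℕ}
    (hlim : Tendsto (fun n => (p n : ℝ) / (q n : ℝ)) atTop (nhds 1)) :
    ∀ᶠ n in atTop, p n < 2 * q n ∧ q n < 2 * p n := by
  filter_upwards [hlim.eventually (Ioo_mem_nhds (by norm_num : (1 / 2 : ℝ) < 1)
    (by norm_num : (1 : ℝ) < 2))] with n ⟨h1, h2⟩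
  have hq : (0 : ℝ) < q n := by
    rcases (Nat.cast_nonneg (q n) : (0 : ℝ) ≤ q n).lt_or_eq with h | h
    · exact h
    · rw [← h, div_zero] at h1; norm_num at h1
  rw [lt_div_iff₀ hq] at h1
  rw [div_lt_iff₀ hq] at h2
  exact ⟨by exact_mod_cast h2, by exact_mod_cast (by linarith : (q n : ℝ) < 2 * p n)⟩

/-- For sequences of distinct odd primes `p n ≠ q n` with `p n / q n → 1`, and
`c n = -(p⁴ - 2p³q + 2p²q² - 2pq³ + q⁴)/(2pq)²`, for all large `n` the map `f_{c n}`
has exactly the six rational preperiodic points `±1/2 ± (p² - pq + q²)/(2pq)` and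
`±(p² - q²)/(2pq)`, of which exactly 2 are periodic, both fixed. -/
theorem graph_6_1_1_family (p q : ℕ → ℕ)
    (hp : ∀ n, (p n).Prime) (hq : ∀ n, (q n).Prime)
    (hpodd : ∀ n, Odd (p n)) (hqodd : ∀ n, Odd (q n))
    (hne : ∀ n, p n ≠ q n)
    (hlim : Tendsto (fun n => (p n : ℝ) / (q n : ℝ)) atTop (nhds 1)) :
    ∀ᶠ n in atTop,
      letI P : ℚ := (p n : ℚ)
      letI Q : ℚ := (q n : ℚ)
      letI c : ℚ := -((P ^ 4 - 2 * P ^ 3 * Q + 2 * P ^ 2 * Q ^ 2 - 2 * P * Q ^ 3 + Q ^ 4) /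
        (2 * P * Q) ^ 2)
      {x : ℚ | IsPreper c x} =
        {1 / 2 + (P ^ 2 - P * Q + Q ^ 2) / (2 * P * Q),
          1 / 2 - (P ^ 2 - P * Q + Q ^ 2) / (2 * P * Q),
          -(1 / 2) + (P ^ 2 - P * Q + Q ^ 2) / (2 * P * Q),
          -(1 / 2) - (P ^ 2 - P * Q + Q ^ 2) / (2 * P * Q),
          (P ^ 2 - Q ^ 2) / (2 * P * Q), -((P ^ 2 - Q ^ 2) / (2 * P * Q))} ∧
      {x : ℚ | IsPreper c x}.ncard = 6 ∧
      {x : ℚ | IsPer c x}.ncard = 2 ∧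
      (∀ x : ℚ, IsPer c x → fc c x = x) := by
  filter_upwards [eventually_lt_two_mul hlim] with n ⟨hpq, hqp⟩
  have hP : (0 : ℚ) < p n := by exact_mod_cast (hp n).pos
  have hQ : (0 : ℚ) < q n := by exact_mod_cast (hq n).pos
  refine preperiodic_structure_fc (family_c_eq hP.ne' hQ.ne')
    (one_half_lt_family_r hP hQ (by exact_mod_cast hne n)) (family_a_sq hP.ne' hQ.ne')
    (family_a_sq_lt_one hP hQ (by exact_mod_cast hpq) (by exact_mod_cast hqp))
    (not_isSquare_family_a_sub_c (hp n) (hq n) (hpodd n) (hqodd n) (hne n) hpq hqp) ?_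
  convert not_isSquare_family_a_sub_c (hq n) (hp n) (hqodd n) (hpodd n) (hne n).symm hqp hpq
    using 2
  ring
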